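/- arXiv:1411.5795 — 7 statements merged into one kernel-verified Lean document; each statement's English description precedes it below -/
import Mathlib

section
/- Suppose (k, h) is admissible, i.e. h = h(k) satisfies 1/ψ_k ≤ h (vacuous when k = 0) and h < 1/ψ_{k+1}. Then the IDF allocation q (given by q_j = Q_j for j ≤ k and q_j = h·Q_j·ψ_j for j > k) is feasible and exhausts the quota: 0 ≤ q_j ≤ Q_j for every j = 1,…,N and Σ_{j=1}^N q_j = Q_tot. -/
open Finset

/-!
Users `j < k` are served in full. The level `h` is exactly the one at which the remaining
quota `Qtot - ∑_{j<k} Q j` is spread over the users `j ≥ k` in proportion to `Q j * ψ j`,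
so the total is `Qtot` by construction. Since `ψ` is decreasing, `h * ψ j ≤ h * ψ k < 1`
for every `j ≥ k`, so these users receive less than their demand; and `h > 0`, either
from `1 / ψ (k - 1) ≤ h` or, when `k = 0`, because then `h = Qtot / ∑_j Q j * ψ j`.
-/

section IDF

variable {N : ℕ} (ψ Q : Fin N → ℝ) (k : ℕ)

lemma sum_filter_le_mul_pos (hψ : ∀ i, 0 < ψ i) (hQpos : ∀ i, 0 < Q i) (hk : k < N) :
    0 < ∑ j ∈ univ.filter (fun j : Fin N => k ≤ (j : ℕ)), Q j * ψ j :=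
  sum_pos (fun i _ => mul_pos (hQpos i) (hψ i)) ⟨⟨k, hk⟩, by simp⟩

lemma sum_ite_lt_eq_sum_add_mul_sum (h : ℝ) :
    ∑ j : Fin N, (if (j : ℕ) < k then Q j else h * Q j * ψ j) =
      ∑ j ∈ univ.filter (fun j : Fin N => (j : ℕ) < k), Q j +
        h * ∑ j ∈ univ.filter (fun j : Fin N => k ≤ (j : ℕ)), Q j * ψ j := by
  simp only [sum_ite, not_lt, mul_sum, mul_assoc]

lemma mul_lt_one_of_le_of_lt_one_div (hψ : ∀ i, 0 < ψ i)
    (hsort : ∀ i j : Fin N, i ≤ j → ψ j ≤ ψ i) (hk : k < N) {h : ℝ} (hh : 0 ≤ h)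
    (hadm : h < 1 / ψ ⟨k, hk⟩) {j : Fin N} (hj : k ≤ (j : ℕ)) :
    h * ψ j < 1 :=
  calc h * ψ j ≤ h * ψ ⟨k, hk⟩ := mul_le_mul_of_nonneg_left (hsort _ _ hj) hh
    _ < 1 := (lt_div_iff₀ (hψ _)).mp hadm

end IDF

/-- For an admissible pair (k, h) the IDF allocation
(q_j = Q_j for j ≤ k, q_j = h·Q_j·ψ_j for j > k) is feasible and exhausts the quota. -/
theorem stmt_0 (N : ℕ) (ψ Q : Fin N → ℝ)
    (hψ : ∀ i, 0 < ψ i) (hQpos : ∀ i, 0 < Q i)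
    (Qtot : ℝ) (hQtot : 0 < Qtot)
    (hsort : ∀ i j : Fin N, i ≤ j → ψ j ≤ ψ i)
    (k : ℕ) (hk : k < N)
    (h : ℝ)
    (hh : h = (Qtot - ∑ j ∈ univ.filter (fun j : Fin N => (j : ℕ) < k), Q j) /
          (∑ j ∈ univ.filter (fun j : Fin N => k ≤ (j : ℕ)), Q j * ψ j))
    (hadm1 : 0 < k → 1 / ψ ⟨k - 1, by omega⟩ ≤ h)
    (hadm2 : h < 1 / ψ ⟨k, hk⟩)
    (q : Fin N → ℝ)
    (hq : ∀ j : Fin N, q j = if (j : ℕ) < k then Q j else h * Q j * ψ j) :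
    (∀ j, 0 ≤ q j ∧ q j ≤ Q j) ∧ ∑ j, q j = Qtot := by
  have hD := sum_filter_le_mul_pos ψ Q k hψ hQpos hk
  have hpos : 0 < h := by
    rcases Nat.eq_zero_or_pos k with rfl | hk0
    · simpa [hh] using div_pos hQtot hD
    · exact (one_div_pos.mpr (hψ _)).trans_le (hadm1 hk0)
  refine ⟨fun j => ?_, ?_⟩
  · rw [hq j]
    split_ifs with hjk
    · exact ⟨(hQpos j).le, le_rfl⟩
    · have hshare := mul_lt_one_of_le_of_lt_one_div ψ k hψ hsort hk hpos.le hadm2 (not_lt.mp hjk)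
      rw [mul_right_comm]
      exact ⟨by positivity [hQpos j, hψ j],
        mul_le_of_le_one_left (hQpos j).le hshare.le⟩
  · rw [funext hq, sum_ite_lt_eq_sum_add_mul_sum, hh, div_mul_cancel₀ _ hD.ne']
    ring
end

section
/- The unique maximizer q* of S_Q over F(Q) fully allocates the available resource: Σ_i q*_i = min(Q_tot, Σ_i Q_i). -/
open Finset

/-- The unique maximizer q* of S_Q over F(Q) fully allocates the
available resource: Σ_i q*_i = min(Q_tot, Σ_i Q_i). -/
theorem stmt_7 (N : ℕ) (hN : 1 ≤ N) (ψ Q c : Fin N → ℝ)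
    (hψ : ∀ i, 0 < ψ i) (hQpos : ∀ i, 0 < Q i) (hc : ∀ i, 0 < c i)
    (Ψ Qtot : ℝ) (hΨ : 0 < Ψ) (hQtot : 0 < Qtot)
    (qstar : Fin N → ℝ)
    (hfeas : (∀ i, 0 ≤ qstar i ∧ qstar i ≤ Q i) ∧ ∑ i, qstar i ≤ Qtot)
    (hmax : ∀ q : Fin N → ℝ, ((∀ i, 0 ≤ q i ∧ q i ≤ Q i) ∧ ∑ i, q i ≤ Qtot) →
      ∑ i, ψ i * Real.log (1 + Ψ * q i / (c i * Q i)) ≤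
        ∑ i, ψ i * Real.log (1 + Ψ * qstar i / (c i * Q i))) :
    ∑ i, qstar i = min Qtot (∑ i, Q i) := by
  obtain ⟨hbd, hsum⟩ := hfeas
  have hle : ∑ i, qstar i ≤ min Qtot (∑ i, Q i) := by
    refine le_min hsum (Finset.sum_le_sum fun i _ => (hbd i).2)
  rcases lt_or_eq_of_le hle with hlt | heq
  · exfalso
    -- there is some i with qstar i < Q i
    have hexists : ∃ i, qstar i < Q i := by
      by_contra h
      push_neg at h
      have : ∑ i, Q i ≤ ∑ i, qstar i := Finset.sum_le_sum fun i _ => h i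
      have := lt_of_lt_of_le (lt_of_lt_of_le hlt (min_le_right _ _)) this
      exact lt_irrefl _ this
    obtain ⟨i, hi⟩ := hexists
    set ε := min (Q i - qstar i) (Qtot - ∑ j, qstar j) with hε
    have hε1 : 0 < Q i - qstar i := by linarith
    have hε2 : 0 < Qtot - ∑ j, qstar j := by
      have := lt_of_lt_of_le hlt (min_le_left _ _)
      linarith
    have hεpos : 0 < ε := lt_min hε1 hε2
    set q : Fin N → ℝ := Function.update qstar i (qstar i + ε) with hq
    have hqi : q i = qstar i + ε := Function.update_self i _ qstar
    have hqj : ∀ j, j ≠ i → q j = qstar j := fun j hj =>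
      Function.update_of_ne hj _ qstar
    have hqsum : ∑ j, q j = (∑ j, qstar j) + ε := by
      rw [hq, Finset.sum_update_of_mem (Finset.mem_univ i)]
      rw [Finset.sdiff_singleton_eq_erase,
        ← Finset.sum_erase_add Finset.univ qstar (Finset.mem_univ i)]
      ring
    have hqfeas : (∀ j, 0 ≤ q j ∧ q j ≤ Q j) ∧ ∑ j, q j ≤ Qtot := by
      constructor
      · intro j
        rcases eq_or_ne j i with rfl | hj
        · rw [hqi]
          constructor
          · have := (hbd j).1; linarith
          · have := min_le_left (Q j - qstar j) (Qtot - ∑ k, qstar k)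
            simp only [hε] at *
            linarith
        · rw [hqj j hj]; exact hbd j
      · rw [hqsum]
        have := min_le_right (Q i - qstar i) (Qtot - ∑ k, qstar k)
        simp only [hε] at *
        linarith
    have hlt2 : ∑ j, ψ j * Real.log (1 + Ψ * qstar j / (c j * Q j)) <
        ∑ j, ψ j * Real.log (1 + Ψ * q j / (c j * Q j)) := by
      apply Finset.sum_lt_sum
      · intro j _
        rcases eq_or_ne j i with rfl | hj
        · apply mul_le_mul_of_nonneg_left _ (hψ j).le
          apply Real.log_le_log
          · have h1 : 0 ≤ Ψ * qstar j / (c j * Q j) :=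
              div_nonneg (mul_nonneg hΨ.le (hbd j).1)
                (mul_nonneg (hc j).le (hQpos j).le)
            linarith
          · rw [hqi]
            have hden : 0 < c j * Q j := mul_pos (hc j) (hQpos j)
            gcongr
            linarith
        · rw [hqj j hj]
      · refine ⟨i, Finset.mem_univ i, ?_⟩
        apply mul_lt_mul_of_pos_left _ (hψ i)
        apply Real.log_lt_log
        · have h1 : 0 ≤ Ψ * qstar i / (c i * Q i) :=
            div_nonneg (mul_nonneg hΨ.le (hbd i).1)
              (mul_pos (hc i) (hQpos i)).le
          linarith
        · rw [hqi]
          have hden : 0 < c i * Q i := mul_pos (hc i) (hQpos i)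
          gcongr
          linarith
    exact absurd (hmax q hqfeas) (not_le.mpr hlt2)
  · exact heq
end

section
/- Let q* be the unique maximizer of S_Q over F(Q). For all indices i, j, if q*_i < Q_i and q*_j > 0, then the marginal weighted utilities satisfy ψ_i/(c_i Q_i + Ψ q*_i) ≤ ψ_j/(c_j Q_j + Ψ q*_j). -/
/-!
If `q*_i < Q_i` and `q*_j > 0`, shifting a small amount `t` of service from user `j` to user `i`
keeps the allocation feasible. Since `q*` maximizes `S_Q`, the derivative of `S_Q` in the direction
`e_i - e_j` is nonpositive; as `S_Q` is separable, that derivative is the difference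
`Ψ ψ_i/(c_i Q_i + Ψ q*_i) - Ψ ψ_j/(c_j Q_j + Ψ q*_j)` of the two marginal utilities.
-/

open Filter Set

open scoped Topology

def feasibleSet {ι : Type*} [Fintype ι] (Q : ι → ℝ) (Qtot : ℝ) : Set (ι → ℝ) :=
  {q | (∀ i, 0 ≤ q i ∧ q i ≤ Q i) ∧ ∑ i, q i ≤ Qtot}

section Exchange

variable {ι : Type*} [Fintype ι] [DecidableEq ι]

/-- Fermat's rule at a maximizer of a separable objective, along the direction `e i - e j`
in which `s` is entered. -/
theorem IsMaxOn.hasDerivAt_le_of_frequently_exchange_mem {f : ι → ℝ → ℝ} {f' : ι → ℝ}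
    {s : Set (ι → ℝ)} {q : ι → ℝ} (hmax : IsMaxOn (fun x => ∑ k, f k (x k)) s q)
    (hf : ∀ k, HasDerivAt (f k) (f' k) (q k)) {i j : ι}
    (hex : ∃ᶠ t in 𝓝[>] (0 : ℝ), q + t • (Pi.single i 1 - Pi.single j 1) ∈ s) :
    f' i ≤ f' j := by
  have hderiv : HasFDerivAt (fun x : ι → ℝ => ∑ k, f k (x k))
      (∑ k, f' k • ContinuousLinearMap.proj k : (ι → ℝ) →L[ℝ] ℝ) q :=
    HasFDerivAt.fun_sum fun k _ => (hf k).comp_hasFDerivAt q (hasFDerivAt_apply k q)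
  have hdir := hmax.localize.hasFDerivWithinAt_nonpos hderiv.hasFDerivWithinAt
    (mem_posTangentConeAt_of_frequently_mem hex)
  simpa [Pi.single_apply, mul_sub] using hdir

theorem eventually_add_smul_exchange_mem_feasibleSet {Q q : ι → ℝ} {Qtot : ℝ}
    (hq : q ∈ feasibleSet Q Qtot) {i j : ι} (hi : q i < Q i) (hj : 0 < q j) :
    ∀ᶠ t in 𝓝[>] (0 : ℝ), q + t • (Pi.single i 1 - Pi.single j 1) ∈ feasibleSet Q Qtot := by
  filter_upwards [Ioo_mem_nhdsGT (lt_min (sub_pos.2 hi) hj)] with t ⟨ht0, ht⟩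
  obtain ⟨hbounds, hsum⟩ := hq
  have hti : t ≤ Q i - q i := ht.le.trans (min_le_left _ _)
  have htj : t ≤ q j := ht.le.trans (min_le_right _ _)
  refine ⟨fun k => ?_, ?_⟩
  · have hqk := hbounds k
    refine ⟨?_, ?_⟩ <;> by_cases hki : k = i <;> by_cases hkj : k = j <;> subst_vars <;>
      simp [*] <;> linarith
  · simpa [Finset.sum_add_distrib, ← Finset.mul_sum] using hsum

end Exchange

theorem hasDerivAt_mul_log_one_add_mul_div {w a D x : ℝ} (hD : D ≠ 0) (hx : D + a * x ≠ 0) :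
    HasDerivAt (fun y => w * Real.log (1 + a * y / D)) (w * a / (D + a * x)) x := by
  have hinner : HasDerivAt (fun y => 1 + a * y / D) (a / D) x := by
    simpa using ((hasDerivAt_id x).const_mul a).div_const D |>.const_add 1
  have hne : 1 + a * x / D ≠ 0 := by
    rw [one_add_div hD]; exact div_ne_zero hx hD
  refine ((hinner.log hne).const_mul w).congr_deriv ?_
  rw [one_add_div hD, div_div_div_cancel_right₀ hD, mul_div_assoc]

theorem stmt_8_general (N : ℕ) (ψ Q c : Fin N → ℝ)
    (hQpos : ∀ i, 0 < Q i) (hc : ∀ i, 0 < c i)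
    (Ψ Qtot : ℝ) (hΨ : 0 < Ψ)
    (qstar : Fin N → ℝ)
    (hfeas : (∀ i, 0 ≤ qstar i ∧ qstar i ≤ Q i) ∧ ∑ i, qstar i ≤ Qtot)
    (hmax : ∀ q : Fin N → ℝ, ((∀ i, 0 ≤ q i ∧ q i ≤ Q i) ∧ ∑ i, q i ≤ Qtot) →
      ∑ i, ψ i * Real.log (1 + Ψ * q i / (c i * Q i)) ≤
        ∑ i, ψ i * Real.log (1 + Ψ * qstar i / (c i * Q i))) :
    ∀ i j : Fin N, qstar i < Q i → 0 < qstar j →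
      ψ i / (c i * Q i + Ψ * qstar i) ≤ ψ j / (c j * Q j + Ψ * qstar j) := by
  intro i j hi hj
  have hD : ∀ k, 0 < c k * Q k := fun k => mul_pos (hc k) (hQpos k)
  have hmarginal := IsMaxOn.hasDerivAt_le_of_frequently_exchange_mem
    (f := fun k y => ψ k * Real.log (1 + Ψ * y / (c k * Q k))) (s := feasibleSet Q Qtot) hmax
    (fun k => hasDerivAt_mul_log_one_add_mul_div (a := Ψ) (hD k).ne'
      (by nlinarith [hD k, (hfeas.1 k).1]))
    (eventually_add_smul_exchange_mem_feasibleSet hfeas hi hj).frequently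
  simp only [mul_div_right_comm _ Ψ] at hmarginal
  exact le_of_mul_le_mul_right hmarginal hΨ

/-- At the maximizer q* of S_Q over F(Q), if q*_i < Q_i and q*_j > 0 then
the marginal weighted utilities satisfy ψ_i/(c_i Q_i + Ψ q*_i) ≤ ψ_j/(c_j Q_j + Ψ q*_j). -/
theorem stmt_8 (N : ℕ) (hN : 1 ≤ N) (ψ Q c : Fin N → ℝ)
    (hψ : ∀ i, 0 < ψ i) (hQpos : ∀ i, 0 < Q i) (hc : ∀ i, 0 < c i)
    (Ψ Qtot : ℝ) (hΨ : 0 < Ψ) (hQtot : 0 < Qtot)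
    (qstar : Fin N → ℝ)
    (hfeas : (∀ i, 0 ≤ qstar i ∧ qstar i ≤ Q i) ∧ ∑ i, qstar i ≤ Qtot)
    (hmax : ∀ q : Fin N → ℝ, ((∀ i, 0 ≤ q i ∧ q i ≤ Q i) ∧ ∑ i, q i ≤ Qtot) →
      ∑ i, ψ i * Real.log (1 + Ψ * q i / (c i * Q i)) ≤
        ∑ i, ψ i * Real.log (1 + Ψ * qstar i / (c i * Q i))) :
    ∀ i j : Fin N, qstar i < Q i → 0 < qstar j →
      ψ i / (c i * Q i + Ψ * qstar i) ≤ ψ j / (c j * Q j + Ψ * qstar j) :=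
  stmt_8_general N ψ Q c hQpos hc Ψ Qtot hΨ qstar hfeas hmax
end

section
/- (Theorem 1.) Let q* be the unique maximizer of S_Q over F(Q) and let u_i = log(1 + Ψ q*_i/(c_i Q_i)) be user i's resulting utility. For all indices i, j, if ψ_i/(c_i Q_i) ≥ ψ_j/(c_j Q_j) and c_i ≤ c_j, then u_i ≥ u_j. -/
open Finset

/-- Theorem 1: at the maximizer q* of S_Q over F(Q), with utilities
u_i = log(1 + Ψ q*_i/(c_i Q_i)), if ψ_i/(c_i Q_i) ≥ ψ_j/(c_j Q_j) and c_i ≤ c_j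
then u_i ≥ u_j. -/
theorem stmt_9 (N : ℕ) (hN : 1 ≤ N) (ψ Q c : Fin N → ℝ)
    (hψ : ∀ i, 0 < ψ i) (hQpos : ∀ i, 0 < Q i) (hc : ∀ i, 0 < c i)
    (Ψ Qtot : ℝ) (hΨ : 0 < Ψ) (hQtot : 0 < Qtot)
    (qstar : Fin N → ℝ)
    (hfeas : (∀ i, 0 ≤ qstar i ∧ qstar i ≤ Q i) ∧ ∑ i, qstar i ≤ Qtot)
    (hmax : ∀ q : Fin N → ℝ, ((∀ i, 0 ≤ q i ∧ q i ≤ Q i) ∧ ∑ i, q i ≤ Qtot) →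
      ∑ i, ψ i * Real.log (1 + Ψ * q i / (c i * Q i)) ≤
        ∑ i, ψ i * Real.log (1 + Ψ * qstar i / (c i * Q i))) :
    ∀ i j : Fin N, ψ i / (c i * Q i) ≥ ψ j / (c j * Q j) → c i ≤ c j →
      Real.log (1 + Ψ * qstar i / (c i * Q i)) ≥ Real.log (1 + Ψ * qstar j / (c j * Q j)) := by
  intro i j hψij hcij
  by_contra hcon
  push_neg at hcon
  obtain ⟨hbox, hsum⟩ := hfeas
  have hdi : (0:ℝ) < c i * Q i := mul_pos (hc i) (hQpos i)
  have hdj : (0:ℝ) < c j * Q j := mul_pos (hc j) (hQpos j)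
  set G := Ψ * qstar i / (c i * Q i) with hG
  set H := Ψ * qstar j / (c j * Q j) with hH
  have hG0 : 0 ≤ G := div_nonneg (mul_nonneg hΨ.le (hbox i).1) hdi.le
  have hH0 : 0 ≤ H := div_nonneg (mul_nonneg hΨ.le (hbox j).1) hdj.le
  clear_value G H
  have hGH : G < H := by
    by_contra hle
    push_neg at hle
    have := Real.log_le_log (by linarith : (0:ℝ) < 1 + H) (by linarith : 1 + H ≤ 1 + G)
    linarith
  have hij : i ≠ j := by
    rintro rfl
    rw [hG, hH] at hGH
    exact lt_irrefl _ hGH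
  -- q_j > 0
  have hqj_pos : 0 < qstar j := by
    by_contra h
    push_neg at h
    have hq0 : qstar j = 0 := le_antisymm h (hbox j).1
    rw [hH, hq0] at hGH
    simp at hGH
    linarith
  -- q_i < Q_i
  have hqi_lt : qstar i < Q i := by
    have h1 : H ≤ Ψ / c j := by
      rw [hH, div_le_div_iff₀ hdj (hc j)]
      nlinarith [(hbox j).2, mul_pos hΨ (hc j)]
    have h2 : Ψ / c j ≤ Ψ / c i := by gcongr; exact hc i
    have h3 : G < Ψ / c i := lt_of_lt_of_le hGH (h1.trans h2)
    rw [hG, div_lt_div_iff₀ hdi (hc i)] at h3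
    nlinarith [mul_pos hΨ (hc i)]
  set D := Ψ / (c i * Q i) + Ψ / (c j * Q j) with hD
  have hDpos : 0 < D := add_pos (div_pos hΨ hdi) (div_pos hΨ hdj)
  clear_value D
  set ε := min (min (Q i - qstar i) (qstar j)) ((H - G) / (2 * D)) with hεdef
  have hεpos : 0 < ε :=
    lt_min (lt_min (by linarith) hqj_pos) (div_pos (by linarith) (by linarith))
  have hε1 : ε ≤ Q i - qstar i := le_trans (min_le_left _ _) (min_le_left _ _)
  have hε2 : ε ≤ qstar j := le_trans (min_le_left _ _) (min_le_right _ _)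
  have hε3 : ε ≤ (H - G) / (2 * D) := min_le_right _ _
  have hεD : ε * D ≤ (H - G) / 2 := by
    have h := mul_le_mul_of_nonneg_right hε3 hDpos.le
    have : (H - G) / (2 * D) * D = (H - G) / 2 := by
      field_simp
    linarith [this ▸ h]
  clear_value ε
  -- the perturbed allocation
  set q' := Function.update (Function.update qstar i (qstar i + ε)) j (qstar j - ε) with hq'def
  clear_value q'
  have hq'i : q' i = qstar i + ε := by
    rw [hq'def, Function.update_of_ne hij, Function.update_self]
  have hq'j : q' j = qstar j - ε := by
    rw [hq'def, Function.update_self]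
  have hq'k : ∀ k, k ≠ i → k ≠ j → q' k = qstar k := by
    intro k hki hkj
    rw [hq'def, Function.update_of_ne hkj, Function.update_of_ne hki]
  have hmemi : i ∈ (univ : Finset (Fin N)) \ {j} := by
    simp [hij]
  have hsumeq : ∑ k, q' k = ∑ k, qstar k := by
    rw [hq'def, Finset.sum_update_of_mem (Finset.mem_univ j),
      Finset.sum_update_of_mem hmemi]
    rw [show ((univ : Finset (Fin N)) \ {j}) = univ.erase j from (Finset.erase_eq _ _).symm,
      show (univ.erase j \ {i} : Finset (Fin N)) = (univ.erase j).erase i from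
        (Finset.erase_eq _ _).symm]
    rw [← Finset.add_sum_erase _ qstar (Finset.mem_univ j),
      ← Finset.add_sum_erase _ qstar (Finset.mem_erase.mpr ⟨hij, Finset.mem_univ i⟩)]
    ring
  have hfeas' : (∀ k, 0 ≤ q' k ∧ q' k ≤ Q k) ∧ ∑ k, q' k ≤ Qtot := by
    constructor
    · intro k
      by_cases hkj : k = j
      · subst hkj
        rw [hq'j]
        constructor
        · linarith
        · linarith [(hbox k).2]
      · by_cases hki : k = i
        · subst hki
          rw [hq'i]
          constructor
          · linarith [(hbox k).1]
          · linarith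
        · rw [hq'k k hki hkj]
          exact hbox k
    · rw [hsumeq]; exact hsum
  -- welfare decomposition
  have hwelf : ∑ k, ψ k * Real.log (1 + Ψ * q' k / (c k * Q k)) =
      ∑ k, ψ k * Real.log (1 + Ψ * qstar k / (c k * Q k)) +
      (ψ i * Real.log (1 + Ψ * (qstar i + ε) / (c i * Q i)) - ψ i * Real.log (1 + G)) +
      (ψ j * Real.log (1 + Ψ * (qstar j - ε) / (c j * Q j)) - ψ j * Real.log (1 + H)) := by
    have h1 : (fun k => ψ k * Real.log (1 + Ψ * q' k / (c k * Q k))) =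
        Function.update (Function.update (fun k => ψ k * Real.log (1 + Ψ * qstar k / (c k * Q k)))
          i (ψ i * Real.log (1 + Ψ * (qstar i + ε) / (c i * Q i))))
          j (ψ j * Real.log (1 + Ψ * (qstar j - ε) / (c j * Q j))) := by
      funext k
      by_cases hkj : k = j
      · subst hkj
        rw [Function.update_self, hq'j]
      · rw [Function.update_of_ne hkj]
        by_cases hki : k = i
        · subst hki
          rw [Function.update_self, hq'i]
        · rw [Function.update_of_ne hki, hq'k k hki hkj]
    rw [h1, Finset.sum_update_of_mem (Finset.mem_univ j), Finset.sum_update_of_mem hmemi]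
    rw [show ((univ : Finset (Fin N)) \ {j}) = univ.erase j from (Finset.erase_eq _ _).symm,
      show (univ.erase j \ {i} : Finset (Fin N)) = (univ.erase j).erase i from
        (Finset.erase_eq _ _).symm]
    rw [← Finset.add_sum_erase _ (fun k => ψ k * Real.log (1 + Ψ * qstar k / (c k * Q k)))
        (Finset.mem_univ j),
      ← Finset.add_sum_erase _ (fun k => ψ k * Real.log (1 + Ψ * qstar k / (c k * Q k)))
        (Finset.mem_erase.mpr ⟨hij, Finset.mem_univ i⟩)]
    rw [hG, hH]
    ring
  -- abbreviations for new utilities arguments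
  have hXe : 1 + Ψ * (qstar i + ε) / (c i * Q i) = (1 + G) + Ψ * ε / (c i * Q i) := by
    rw [hG]; ring
  have hYe : 1 + Ψ * (qstar j - ε) / (c j * Q j) = (1 + H) - Ψ * ε / (c j * Q j) := by
    rw [hH]; ring
  set X' := (1 + G) + Ψ * ε / (c i * Q i) with hX'def
  set Y' := (1 + H) - Ψ * ε / (c j * Q j) with hY'def
  clear_value X' Y'
  have hX : (0:ℝ) < 1 + G := by linarith
  have hY : (0:ℝ) < 1 + H := by linarith
  have hX'pos : 0 < X' := by
    have : 0 < Ψ * ε / (c i * Q i) := div_pos (mul_pos hΨ hεpos) hdi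
    rw [hX'def]; linarith
  have hsumD : Ψ * ε / (c i * Q i) + Ψ * ε / (c j * Q j) = ε * D := by
    rw [hD]; ring
  have hX'Y' : X' < Y' := by
    rw [hX'def, hY'def]
    have h2 : ε * D ≤ (H - G) / 2 := hεD
    linarith [hsumD]
  have hY'pos : 0 < Y' := lt_trans hX'pos hX'Y'
  -- log lower bound for gain
  have lb1 : Real.log X' - Real.log (1 + G) ≥ (Ψ * ε / (c i * Q i)) / X' := by
    have h := Real.log_le_sub_one_of_pos (div_pos hX hX'pos)
    rw [Real.log_div (ne_of_gt hX) (ne_of_gt hX'pos)] at h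
    have he : (1 + G) / X' - 1 = -((Ψ * ε / (c i * Q i)) / X') := by
      rw [div_sub_one (ne_of_gt hX'pos), hX'def]
      ring
    linarith [he ▸ h]
  -- log upper bound for loss
  have lb2 : Real.log (1 + H) - Real.log Y' ≤ (Ψ * ε / (c j * Q j)) / Y' := by
    have h := Real.log_le_sub_one_of_pos (div_pos hY hY'pos)
    rw [Real.log_div (ne_of_gt hY) (ne_of_gt hY'pos)] at h
    have he : (1 + H) / Y' - 1 = (Ψ * ε / (c j * Q j)) / Y' := by
      rw [div_sub_one (ne_of_gt hY'pos), hY'def]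
      ring
    linarith [he ▸ h]
  -- compare marginal gains
  have hψ' : ψ j * (c i * Q i) ≤ ψ i * (c j * Q j) := by
    rw [ge_iff_le, div_le_div_iff₀ hdj hdi] at hψij
    linarith
  have hcomp : ψ j * ((Ψ * ε / (c j * Q j)) / Y') < ψ i * ((Ψ * ε / (c i * Q i)) / X') := by
    have e1 : ψ i * ((Ψ * ε / (c i * Q i)) / X') = (ψ i * (Ψ * ε)) / ((c i * Q i) * X') := by
      field_simp
    have e2 : ψ j * ((Ψ * ε / (c j * Q j)) / Y') = (ψ j * (Ψ * ε)) / ((c j * Q j) * Y') := by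
      field_simp
    rw [e1, e2, div_lt_div_iff₀ (mul_pos hdj hY'pos) (mul_pos hdi hX'pos)]
    have hΨε : 0 < Ψ * ε := mul_pos hΨ hεpos
    linarith [mul_lt_mul_of_pos_left hX'Y' (mul_pos (mul_pos (hψ i) hΨε) hdj),
      mul_le_mul_of_nonneg_right hψ' (mul_nonneg hΨε.le hX'pos.le)]
  have key : ψ i * Real.log X' + ψ j * Real.log Y' >
      ψ i * Real.log (1 + G) + ψ j * Real.log (1 + H) := by
    have g1 : ψ i * (Real.log X' - Real.log (1 + G)) ≥
        ψ i * ((Ψ * ε / (c i * Q i)) / X') := by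
      exact mul_le_mul_of_nonneg_left lb1 (hψ i).le
    have g2 : ψ j * (Real.log (1 + H) - Real.log Y') ≤
        ψ j * ((Ψ * ε / (c j * Q j)) / Y') := by
      exact mul_le_mul_of_nonneg_left lb2 (hψ j).le
    linarith [g1, g2, hcomp]
  have hle := hmax q' hfeas'
  rw [hwelf, hXe, hYe] at hle
  linarith
end

section
/- (Corollary 1.) Let q* be the unique maximizer of S_Q over F(Q) and let u_i = log(1 + Ψ q*_i/(c_i Q_i)) be user i's resulting utility. For all indices i, j, if ψ_i/Q_i ≥ ψ_j/Q_j and c_i ≤ c_j, then u_i ≥ u_j. -/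
open Finset

set_option maxHeartbeats 2000000 in
/-- Corollary 1: at the maximizer q* of S_Q over F(Q), with utilities
u_i = log(1 + Ψ q*_i/(c_i Q_i)), if ψ_i/Q_i ≥ ψ_j/Q_j and c_i ≤ c_j then u_i ≥ u_j. -/
theorem stmt_10 (N : ℕ) (hN : 1 ≤ N) (ψ Q c : Fin N → ℝ)
    (hψ : ∀ i, 0 < ψ i) (hQpos : ∀ i, 0 < Q i) (hc : ∀ i, 0 < c i)
    (Ψ Qtot : ℝ) (hΨ : 0 < Ψ) (hQtot : 0 < Qtot)
    (qstar : Fin N → ℝ)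
    (hfeas : (∀ i, 0 ≤ qstar i ∧ qstar i ≤ Q i) ∧ ∑ i, qstar i ≤ Qtot)
    (hmax : ∀ q : Fin N → ℝ, ((∀ i, 0 ≤ q i ∧ q i ≤ Q i) ∧ ∑ i, q i ≤ Qtot) →
      ∑ i, ψ i * Real.log (1 + Ψ * q i / (c i * Q i)) ≤
        ∑ i, ψ i * Real.log (1 + Ψ * qstar i / (c i * Q i))) :
    ∀ i j : Fin N, ψ i / Q i ≥ ψ j / Q j → c i ≤ c j →
      Real.log (1 + Ψ * qstar i / (c i * Q i)) ≥ Real.log (1 + Ψ * qstar j / (c j * Q j)) := by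
  intro i j hψQ hcij
  by_contra hlt
  push_neg at hlt
  obtain ⟨hbox, hsum⟩ := hfeas
  have hi0 := (hbox i).1
  have hiQ := (hbox i).2
  have hj0 := (hbox j).1
  have hjQ := (hbox j).2
  have hcQi : 0 < c i * Q i := mul_pos (hc i) (hQpos i)
  have hcQj : 0 < c j * Q j := mul_pos (hc j) (hQpos j)
  set ai := Ψ / (c i * Q i) with hai
  set aj := Ψ / (c j * Q j) with haj
  have hai0 : 0 < ai := div_pos hΨ hcQi
  have haj0 : 0 < aj := div_pos hΨ hcQj
  set xi := Ψ * qstar i / (c i * Q i) with hxi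
  set xj := Ψ * qstar j / (c j * Q j) with hxj
  have hxi0 : 0 ≤ xi := by positivity
  have hxj0 : 0 ≤ xj := by positivity
  -- from hlt : log (1+xi) < log (1+xj), deduce xi < xj
  have hx : xi < xj := by
    by_contra h
    push_neg at h
    have : Real.log (1 + xj) ≤ Real.log (1 + xi) := by
      apply Real.log_le_log (by linarith) (by linarith)
    linarith
  have hij : i ≠ j := by
    intro h
    rw [hxi, hxj, h] at hx
    exact lt_irrefl _ hx
  -- q_i < Q_i
  have hiQ' : qstar i < Q i := by
    rcases lt_or_eq_of_le hiQ with h | h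
    · exact h
    · exfalso
      have e1 : xi = Ψ / c i := by
        rw [hxi, h]
        rw [div_eq_div_iff hcQi.ne' (hc i).ne']
        ring
      have e2 : xj ≤ Ψ / c j := by
        rw [hxj, div_le_div_iff₀ hcQj (hc j)]
        nlinarith [mul_le_mul_of_nonneg_left hjQ (le_of_lt hΨ), hc j]
      have e3 : Ψ / c j ≤ Ψ / c i := by
        apply div_le_div_of_nonneg_left (le_of_lt hΨ) (hc i) hcij
      linarith
  -- q_j > 0
  have hj0' : 0 < qstar j := by
    rcases lt_or_eq_of_le hj0 with h | h
    · exact h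
    · exfalso
      have : xj = 0 := by rw [hxj, ← h]; ring
      linarith
  -- choose ε
  set ε := min (min (Q i - qstar i) (qstar j)) ((xj - xi) / (2 * (ai + aj))) with hε
  have hε0 : 0 < ε :=
    lt_min (lt_min (by linarith) hj0') (div_pos (by linarith) (by positivity))
  have hε1 : ε ≤ Q i - qstar i := le_trans (min_le_left _ _) (min_le_left _ _)
  have hε2 : ε ≤ qstar j := le_trans (min_le_left _ _) (min_le_right _ _)
  have hε3 : xi + ε * ai < xj - ε * aj := by
    have h4 : ε ≤ (xj - xi) / (2 * (ai + aj)) := min_le_right _ _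
    rw [le_div_iff₀ (by positivity)] at h4
    nlinarith
  -- key coefficient inequality : ψ i * ai ≥ ψ j * aj
  have hcoef : ψ j * aj ≤ ψ i * ai := by
    have h1 : ψ j * Q i ≤ ψ i * Q j := by
      rw [ge_iff_le, div_le_div_iff₀ (hQpos j) (hQpos i)] at hψQ
      linarith
    have e1 : ψ j * aj = ψ j * Ψ / (c j * Q j) := by rw [haj]; ring
    have e2 : ψ i * ai = ψ i * Ψ / (c i * Q i) := by rw [hai]; ring
    rw [e1, e2, div_le_div_iff₀ hcQj hcQi]
    nlinarith [mul_le_mul_of_nonneg_left hcij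
        (mul_nonneg (mul_nonneg (hψ j).le hΨ.le) (hQpos i).le),
      mul_le_mul_of_nonneg_left h1 (mul_nonneg hΨ.le (hc j).le)]
  -- the perturbed allocation
  set q' : Fin N → ℝ := fun k => if k = i then qstar i + ε else if k = j then qstar j - ε else qstar k with hq'
  have hq'i : q' i = qstar i + ε := by
    show (if i = i then qstar i + ε else if i = j then qstar j - ε else qstar i) = _
    rw [if_pos rfl]
  have hq'j : q' j = qstar j - ε := by
    show (if j = i then qstar i + ε else if j = j then qstar j - ε else qstar j) = _
    rw [if_neg (fun h => hij h.symm), if_pos rfl]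
  have hq'other : ∀ k, k ≠ i → k ≠ j → q' k = qstar k := by
    intro k h1 h2
    show (if k = i then qstar i + ε else if k = j then qstar j - ε else qstar k) = _
    rw [if_neg h1, if_neg h2]
  have hfeas' : (∀ k, 0 ≤ q' k ∧ q' k ≤ Q k) ∧ ∑ k, q' k ≤ Qtot := by
    constructor
    · intro k
      by_cases h1 : k = i
      · subst h1; rw [hq'i]; constructor <;> [positivity; linarith]
      · by_cases h2 : k = j
        · subst h2; rw [hq'j]; constructor <;> linarith
        · rw [hq'other k h1 h2]; exact ⟨(hbox k).1, (hbox k).2⟩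
    · have : ∑ k, q' k = ∑ k, qstar k := by
        have hsub : ({i, j} : Finset (Fin N)) ⊆ univ := subset_univ _
        rw [← Finset.sum_sdiff hsub, ← Finset.sum_sdiff hsub]
        congr 1
        · apply Finset.sum_congr rfl
          intro k hk
          simp only [Finset.mem_sdiff, Finset.mem_insert, Finset.mem_singleton] at hk
          push_neg at hk
          exact hq'other k hk.2.1 hk.2.2
        · rw [Finset.sum_pair hij, Finset.sum_pair hij, hq'i, hq'j]; ring
      linarith [this ▸ hsum]
  -- welfare comparison
  have hcmp := hmax q' hfeas'
  -- reduce to the pair {i, j}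
  have hpair : ψ i * Real.log (1 + Ψ * q' i / (c i * Q i)) +
      ψ j * Real.log (1 + Ψ * q' j / (c j * Q j)) ≤
      ψ i * Real.log (1 + xi) + ψ j * Real.log (1 + xj) := by
    have hsub : ({i, j} : Finset (Fin N)) ⊆ univ := subset_univ _
    rw [← Finset.sum_sdiff hsub, ← Finset.sum_sdiff hsub] at hcmp
    have heq : ∑ k ∈ univ \ {i, j}, ψ k * Real.log (1 + Ψ * q' k / (c k * Q k)) =
        ∑ k ∈ univ \ {i, j}, ψ k * Real.log (1 + Ψ * qstar k / (c k * Q k)) := by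
      apply Finset.sum_congr rfl
      intro k hk
      simp only [Finset.mem_sdiff, Finset.mem_insert, Finset.mem_singleton] at hk
      push_neg at hk
      rw [hq'other k hk.2.1 hk.2.2]
    rw [Finset.sum_pair hij, Finset.sum_pair hij, heq] at hcmp
    linarith
  -- rewrite the new arguments
  have e1 : 1 + Ψ * q' i / (c i * Q i) = 1 + xi + ε * ai := by
    rw [hq'i, hxi, hai]; ring
  have e2 : 1 + Ψ * q' j / (c j * Q j) = 1 + xj - ε * aj := by
    rw [hq'j, hxj, haj]; ring
  rw [e1, e2] at hpair
  set Di := 1 + xi + ε * ai with hDi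
  set Dj := 1 + xj - ε * aj with hDj
  have hDi0 : 0 < Di := by positivity
  have hDj0 : Di < Dj := by rw [hDi, hDj]; linarith
  have hDj0' : 0 < Dj := lt_trans hDi0 hDj0
  -- gain bound: log Di - log (1+xi) ≥ ε*ai / Di
  have hgain : ε * ai / Di ≤ Real.log Di - Real.log (1 + xi) := by
    have h1 : Real.log ((1 + xi) / Di) ≤ (1 + xi) / Di - 1 :=
      Real.log_le_sub_one_of_pos (by positivity)
    have h2 : Real.log ((1 + xi) / Di) = Real.log (1 + xi) - Real.log Di :=
      Real.log_div (by positivity) (by positivity)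
    have h3 : (1 + xi) / Di - 1 = -(ε * ai / Di) := by
      have hxe : (1 + xi) = Di - ε * ai := by rw [hDi]; ring
      rw [hxe, sub_div, div_self hDi0.ne']
      ring
    rw [h2, h3] at h1
    linarith
  -- loss bound: log (1+xj) - log Dj ≤ ε*aj / Dj
  have hloss : Real.log (1 + xj) - Real.log Dj ≤ ε * aj / Dj := by
    have h1 : Real.log ((1 + xj) / Dj) ≤ (1 + xj) / Dj - 1 :=
      Real.log_le_sub_one_of_pos (by positivity)
    have h2 : Real.log ((1 + xj) / Dj) = Real.log (1 + xj) - Real.log Dj :=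
      Real.log_div (by positivity) (by positivity)
    have h3 : (1 + xj) / Dj - 1 = ε * aj / Dj := by
      have hxe : (1 + xj) = Dj + ε * aj := by rw [hDj]; ring
      rw [hxe, add_div, div_self hDj0'.ne']
      ring
    rw [h2, h3] at h1
    linarith
  -- strict comparison of the bounds
  have hkey : ψ j * (ε * aj / Dj) < ψ i * (ε * ai / Di) := by
    have h1 : ψ j * (ε * aj) / Dj < ψ j * (ε * aj) / Di :=
      div_lt_div_of_pos_left (mul_pos (hψ j) (mul_pos hε0 haj0)) hDi0 hDj0
    have hnum : ψ j * (ε * aj) ≤ ψ i * (ε * ai) := by nlinarith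
    have h2 : ψ j * (ε * aj) / Di ≤ ψ i * (ε * ai) / Di := by gcongr
    have e1' : ψ j * (ε * aj / Dj) = ψ j * (ε * aj) / Dj := by ring
    have e2' : ψ i * (ε * ai / Di) = ψ i * (ε * ai) / Di := by ring
    rw [e1', e2']
    linarith
  have hψi := hψ i
  have hψj := hψ j
  nlinarith [mul_le_mul_of_nonneg_left hgain (le_of_lt (hψ i)),
    mul_le_mul_of_nonneg_left hloss (le_of_lt (hψ j)), hkey]
end

section
/- (Lemma 1, sufficiency.) If a strategy profile Q with all Q_i > 0 satisfies both C1 (Σ_i Q_i = Q_tot) and C2 (h_i(Q) = h_j(Q) for all i, j), then Q is a Nash equilibrium of the demand-declaration game: no user i has a unilateral deviation Q_i' > 0 leading to a strictly preferred outcome. -/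
/-!
At a profile satisfying C1 the full allocation `q = Q` is feasible and dominates every other
feasible allocation coordinatewise, so the welfare maximizer grants every user its full demand
and user `i` already enjoys the largest utility `log (1 + Ψ / c i)` any allocation can give.
A deviation `Q'` can therefore only help `i` by granting it all of a larger demand `Q' > Q i`.
Since the quota is exhausted, some other user `j` is then under-served. C2 says exactly that
the marginal welfares `ψ Ψ / ((Ψ + c) Q)` of all users at the full allocation coincide, so after
the deviation the marginal welfare of `j` exceeds that of `i`, and moving a small amount of
service from `i` to `j` would raise the welfare, contradicting optimality.
-/

open Finset Filter Topology

theorem HasDerivAt.eventually_nhdsGT_lt {f : ℝ → ℝ} {f' x : ℝ} (hf : HasDerivAt f f' x)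
    (hf' : 0 < f') : ∀ᶠ y in 𝓝[>] x, f x < f y := by
  filter_upwards [(hf.tendsto_slope.mono_left (nhdsGT_le_nhdsNE x)).eventually
    (eventually_gt_nhds hf'), self_mem_nhdsWithin] with y hslope hxy
  exact (slope_pos_iff hxy).1 hslope

theorem exists_add_lt_add_of_hasDerivAt {f g : ℝ → ℝ} {a b x y δ : ℝ} (hf : HasDerivAt f a x)
    (hg : HasDerivAt g b y) (hab : a < b) (hδ : 0 < δ) :
    ∃ t ∈ Set.Ioo 0 δ, f x + g y < f (x - t) + g (y + t) := by
  have hf₀ : HasDerivAt (fun t ↦ f (x - t)) (-a) 0 :=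
    HasDerivAt.comp_const_sub x 0 (by rwa [sub_zero])
  have hg₀ : HasDerivAt (fun t ↦ g (y + t)) b 0 :=
    HasDerivAt.comp_const_add y 0 (by rwa [add_zero])
  have hpos := (hf₀.add hg₀).eventually_nhdsGT_lt (by linarith)
  obtain ⟨t, hlt, ht⟩ := (hpos.and (Ioo_mem_nhdsGT hδ)).exists
  exact ⟨t, ht, by simpa using hlt⟩

theorem exists_ne_lt_of_sum_le {ι : Type*} [Fintype ι] {p q : ι → ℝ} {i : ι}
    (hsum : ∑ k, q k ≤ ∑ k, p k) (hi : p i < q i) : ∃ j ≠ i, q j < p j := by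
  by_contra! h
  refine hsum.not_gt (Finset.sum_lt_sum (fun k _ ↦ ?_) ⟨i, mem_univ i, hi⟩)
  rcases eq_or_ne k i with rfl | hk
  exacts [hi.le, h k hk]

noncomputable section

namespace DemandGame

section Transfer

variable {ι : Type*} [DecidableEq ι] {q : ι → ℝ} {i j : ι} {t : ℝ}

def transfer (q : ι → ℝ) (i j : ι) (t : ℝ) : ι → ℝ :=
  Function.update (Function.update q i (q i - t)) j (q j + t)

theorem transfer_apply_left (hij : i ≠ j) : transfer q i j t i = q i - t := by
  simp [transfer, hij]

theorem transfer_apply_right : transfer q i j t j = q j + t := by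
  simp [transfer]

theorem transfer_apply_of_ne {k : ι} (hki : k ≠ i) (hkj : k ≠ j) : transfer q i j t k = q k := by
  simp [transfer, hki, hkj]

theorem sum_comp_transfer_sub [Fintype ι] (F : ι → ℝ → ℝ) (hij : i ≠ j) :
    ∑ k, F k (transfer q i j t k) - ∑ k, F k (q k) =
      (F i (q i - t) - F i (q i)) + (F j (q j + t) - F j (q j)) := by
  rw [← Finset.sum_sub_distrib, Fintype.sum_eq_add i j hij fun k ⟨hki, hkj⟩ ↦ by
    rw [transfer_apply_of_ne hki hkj, sub_self], transfer_apply_left hij, transfer_apply_right]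

theorem sum_transfer [Fintype ι] (hij : i ≠ j) : ∑ k, transfer q i j t k = ∑ k, q k := by
  linarith [sum_comp_transfer_sub (q := q) (t := t) (fun _ x ↦ x) hij]

end Transfer

section Utility

variable {c Ψ P : ℝ}

def utility (c Ψ P x : ℝ) : ℝ := Real.log (1 + Ψ * x / (c * P))

def marginalUtility (c Ψ P x : ℝ) : ℝ := Ψ / (c * P + Ψ * x)

theorem utility_self (hP : P ≠ 0) : utility c Ψ P P = Real.log (1 + Ψ / c) := by
  rw [utility, mul_div_mul_right _ _ hP]

theorem strictMonoOn_utility (hc : 0 < c) (hΨ : 0 < Ψ) (hP : 0 < P) :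
    StrictMonoOn (utility c Ψ P) (Set.Ici 0) := by
  intro x hx y _ hxy
  simp only [Set.mem_Ici] at hx
  unfold utility
  gcongr

theorem hasDerivAt_utility {x : ℝ} (hcP : c * P ≠ 0) (hx : c * P + Ψ * x ≠ 0) :
    HasDerivAt (utility c Ψ P) (marginalUtility c Ψ P x) x := by
  have hlog : 1 + Ψ * x / (c * P) ≠ 0 := by
    rwa [one_add_div hcP, div_ne_zero_iff, and_iff_left hcP]
  refine (((hasDerivAt_id x).const_mul Ψ).div_const (c * P) |>.const_add 1).log hlog
    |>.congr_deriv ?_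
  rw [marginalUtility, id, mul_one, one_add_div hcP, div_div_div_cancel_right₀ hcP]

end Utility

section Welfare

variable {ι : Type*} [Fintype ι] {ψ c : ι → ℝ} {Ψ Qtot : ℝ} {P q : ι → ℝ}

def IsFeasible (Qtot : ℝ) (P q : ι → ℝ) : Prop :=
  (∀ k, 0 ≤ q k ∧ q k ≤ P k) ∧ ∑ k, q k ≤ Qtot

def welfare (ψ c : ι → ℝ) (Ψ : ℝ) (P q : ι → ℝ) : ℝ :=
  ∑ k, ψ k * utility (c k) Ψ (P k) (q k)

def IsWelfareMax (ψ c : ι → ℝ) (Ψ Qtot : ℝ) (P q : ι → ℝ) : Prop :=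
  IsFeasible Qtot P q ∧ ∀ q', IsFeasible Qtot P q' → welfare ψ c Ψ P q' ≤ welfare ψ c Ψ P q

theorem IsWelfareMax.eq_of_sum_le (hmax : IsWelfareMax ψ c Ψ Qtot P q) (hψ : ∀ k, 0 < ψ k)
    (hc : ∀ k, 0 < c k) (hΨ : 0 < Ψ) (hP : ∀ k, 0 < P k) (hsum : ∑ k, P k ≤ Qtot) : q = P := by
  have hmono k := strictMonoOn_utility (hc k) hΨ (hP k)
  have hq k : q k ∈ Set.Ici 0 := (hmax.1.1 k).1
  have hPk k : P k ∈ Set.Ici 0 := (hP k).le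
  by_contra hne
  obtain ⟨k, hk⟩ := Function.ne_iff.1 hne
  have hlt : q k < P k := ((hmax.1.1 k).2).lt_of_ne hk
  refine (hmax.2 P ⟨fun k ↦ ⟨(hP k).le, le_rfl⟩, hsum⟩).not_gt
    (Finset.sum_lt_sum (fun l _ ↦ ?_) ⟨k, mem_univ k, ?_⟩)
  · exact mul_le_mul_of_nonneg_left (((hmono l).le_iff_le (hq l) (hPk l)).2 (hmax.1.1 l).2)
      (hψ l).le
  · exact mul_lt_mul_of_pos_left (hmono k (hq k) (hPk k) hlt) (hψ k)

theorem IsWelfareMax.marginal_le [DecidableEq ι] (hmax : IsWelfareMax ψ c Ψ Qtot P q)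
    (hc : ∀ k, 0 < c k) (hΨ : 0 < Ψ) (hP : ∀ k, 0 < P k) {i j : ι} (hij : i ≠ j)
    (hi : 0 < q i) (hj : q j < P j) :
    ψ j * marginalUtility (c j) Ψ (P j) (q j) ≤ ψ i * marginalUtility (c i) Ψ (P i) (q i) := by
  have hderiv k : HasDerivAt (fun x ↦ ψ k * utility (c k) Ψ (P k) x)
      (ψ k * marginalUtility (c k) Ψ (P k) (q k)) (q k) := by
    have hqk := (hmax.1.1 k).1
    have hck := hc k
    have hPk := hP k
    exact (hasDerivAt_utility (by positivity) (by positivity)).const_mul (ψ k)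
  by_contra! hlt
  obtain ⟨t, ⟨ht₀, htδ⟩, hgain⟩ :=
    exists_add_lt_add_of_hasDerivAt (hderiv i) (hderiv j) hlt (lt_min hi (sub_pos.2 hj))
  have hfeas : IsFeasible Qtot P (transfer q i j t) := by
    refine ⟨fun k ↦ ?_, (sum_transfer hij).trans_le hmax.1.2⟩
    have hqk := hmax.1.1 k
    have hti := min_le_left (q i) (P j - q j)
    have htj := min_le_right (q i) (P j - q j)
    rcases eq_or_ne k i with rfl | hki
    · rw [transfer_apply_left hij]; constructor <;> linarith
    rcases eq_or_ne k j with rfl | hkj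
    · rw [transfer_apply_right]; constructor <;> linarith
    · rw [transfer_apply_of_ne hki hkj]; exact hqk
  have hdiff :=
    sum_comp_transfer_sub (fun k x ↦ ψ k * utility (c k) Ψ (P k) x) (q := q) (t := t) hij
  have hopt := hmax.2 _ hfeas
  simp only [welfare] at hopt
  linarith

end Welfare

theorem marginal_lt_of_balanced {ψi ψj ci cj Qi Qj Ψ Q' q : ℝ} (hψi : 0 < ψi) (hψj : 0 < ψj)
    (hci : 0 < ci) (hcj : 0 < cj) (hΨ : 0 < Ψ) (hQi : 0 < Qi) (hQj : 0 < Qj)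
    (hbal : Qi * (Ψ + ci) / (Ψ * ψi) = Qj * (Ψ + cj) / (Ψ * ψj))
    (hQ' : Qi < Q') (hq : 0 ≤ q) (hqQ : q < Qj) :
    ψi * marginalUtility ci Ψ Q' Q' < ψj * marginalUtility cj Ψ Qj q := by
  unfold marginalUtility
  calc ψi * (Ψ / (ci * Q' + Ψ * Q')) < ψi * (Ψ / (ci * Qi + Ψ * Qi)) := by gcongr
    _ = Ψ * ψi / (Qi * (Ψ + ci)) := by field_simp; ring
    _ = Ψ * ψj / (Qj * (Ψ + cj)) := by rw [← inv_div, hbal, inv_div]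
    _ = ψj * (Ψ / (cj * Qj + Ψ * Qj)) := by field_simp; ring
    _ < ψj * (Ψ / (cj * Qj + Ψ * q)) := by gcongr

end DemandGame

end

open DemandGame

theorem stmt_14_general (N : ℕ) (ψ c : Fin N → ℝ)
    (hψ : ∀ i, 0 < ψ i) (hc : ∀ i, 0 < c i)
    (Ψ Qtot : ℝ) (hΨ : 0 < Ψ)
    (qalloc : (Fin N → ℝ) → Fin N → ℝ)
    (hqalloc : ∀ P : Fin N → ℝ, (∀ i, 0 < P i) →
      ((∀ i, 0 ≤ qalloc P i ∧ qalloc P i ≤ P i) ∧ ∑ i, qalloc P i ≤ Qtot) ∧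
      ∀ q' : Fin N → ℝ, ((∀ i, 0 ≤ q' i ∧ q' i ≤ P i) ∧ ∑ i, q' i ≤ Qtot) →
        ∑ i, ψ i * Real.log (1 + Ψ * q' i / (c i * P i)) ≤
          ∑ i, ψ i * Real.log (1 + Ψ * qalloc P i / (c i * P i)))
    (Q : Fin N → ℝ) (hQpos : ∀ i, 0 < Q i)
    (hC1 : ∑ i, Q i = Qtot)
    (hC2 : ∀ i j : Fin N, Q i * (Ψ + c i) / (Ψ * ψ i) = Q j * (Ψ + c j) / (Ψ * ψ j)) :
    ∀ i : Fin N, ∀ Q' : ℝ, 0 < Q' →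
      ¬ (Real.log (1 + Ψ * qalloc (Function.update Q i Q') i / (c i * Q')) >
           Real.log (1 + Ψ * qalloc Q i / (c i * Q i)) ∨
         (Real.log (1 + Ψ * qalloc (Function.update Q i Q') i / (c i * Q')) =
            Real.log (1 + Ψ * qalloc Q i / (c i * Q i)) ∧
          qalloc (Function.update Q i Q') i > qalloc Q i)) := by
  intro i Q' hQ' hbetter
  set P := Function.update Q i Q'
  have hP k : 0 < P k := by
    rcases eq_or_ne k i with rfl | hk
    exacts [by simpa [P] using hQ', by simpa [P, hk] using hQpos k]
  have hmax : IsWelfareMax ψ c Ψ Qtot P (qalloc P) := hqalloc P hP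
  have hfull : qalloc Q = Q := IsWelfareMax.eq_of_sum_le (hqalloc Q hQpos) hψ hc hΨ hQpos hC1.le
  have hmono := strictMonoOn_utility (hc i) hΨ hQ'
  have hqi : qalloc P i ∈ Set.Ici 0 := (hmax.1.1 i).1
  have hqiQ' : qalloc P i ≤ Q' := by simpa [P] using (hmax.1.1 i).2
  change utility (c i) Ψ Q' (qalloc P i) > utility (c i) Ψ (Q i) (qalloc Q i) ∨
    (utility (c i) Ψ Q' (qalloc P i) = utility (c i) Ψ (Q i) (qalloc Q i) ∧
      qalloc P i > qalloc Q i) at hbetter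
  rw [hfull, utility_self (hQpos i).ne', ← utility_self hQ'.ne'] at hbetter
  obtain ⟨hqi_eq, hQi_lt⟩ : qalloc P i = Q' ∧ Q i < qalloc P i := by
    rcases hbetter with hgt | ⟨heq, hgt⟩
    · exact absurd ((hmono.le_iff_le hqi hQ'.le).2 hqiQ') hgt.not_ge
    · exact ⟨hmono.injOn hqi hQ'.le heq, hgt⟩
  obtain ⟨j, hji, hj⟩ := exists_ne_lt_of_sum_le (hmax.1.2.trans hC1.symm.le) hQi_lt
  have hPj : P j = Q j := Function.update_of_ne hji Q' Q
  have hle := hmax.marginal_le hc hΨ hP hji.symm (hqi_eq ▸ hQ') (hPj ▸ hj)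
  rw [hPj, hqi_eq, show P i = Q' by simp [P]] at hle
  exact hle.not_gt (marginal_lt_of_balanced (hψ i) (hψ j) (hc i) (hc j) hΨ (hQpos i) (hQpos j)
    (hC2 i j) (hqi_eq ▸ hQi_lt) (hmax.1.1 j).1 hj)

/-- Lemma 1, sufficiency: if a strategy profile Q of positive declared
demands satisfies C1 (Σ_i Q_i = Q_tot) and C2 (h_i(Q) = h_j(Q) for all i,j, where
h_i(Q) = Q_i(Ψ+c_i)/(Ψψ_i)), then Q is a Nash equilibrium of the demand-declaration
game: no user i has a unilateral deviation Q' > 0 yielding a strictly preferred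
outcome (higher utility, or equal utility and strictly larger granted quota).
Here `qalloc` assigns to each positive profile the (unique) maximizer of the social
welfare S over the feasible set of that profile. -/
theorem stmt_14 (N : ℕ) (hN : 1 ≤ N) (ψ c : Fin N → ℝ)
    (hψ : ∀ i, 0 < ψ i) (hc : ∀ i, 0 < c i)
    (Ψ Qtot : ℝ) (hΨ : 0 < Ψ) (hQtot : 0 < Qtot)
    (qalloc : (Fin N → ℝ) → Fin N → ℝ)
    (hqalloc : ∀ P : Fin N → ℝ, (∀ i, 0 < P i) →
      ((∀ i, 0 ≤ qalloc P i ∧ qalloc P i ≤ P i) ∧ ∑ i, qalloc P i ≤ Qtot) ∧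
      ∀ q' : Fin N → ℝ, ((∀ i, 0 ≤ q' i ∧ q' i ≤ P i) ∧ ∑ i, q' i ≤ Qtot) →
        ∑ i, ψ i * Real.log (1 + Ψ * q' i / (c i * P i)) ≤
          ∑ i, ψ i * Real.log (1 + Ψ * qalloc P i / (c i * P i)))
    (Q : Fin N → ℝ) (hQpos : ∀ i, 0 < Q i)
    (hC1 : ∑ i, Q i = Qtot)
    (hC2 : ∀ i j : Fin N, Q i * (Ψ + c i) / (Ψ * ψ i) = Q j * (Ψ + c j) / (Ψ * ψ j)) :
    ∀ i : Fin N, ∀ Q' : ℝ, 0 < Q' →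
      ¬ (Real.log (1 + Ψ * qalloc (Function.update Q i Q') i / (c i * Q')) >
           Real.log (1 + Ψ * qalloc Q i / (c i * Q i)) ∨
         (Real.log (1 + Ψ * qalloc (Function.update Q i Q') i / (c i * Q')) =
            Real.log (1 + Ψ * qalloc Q i / (c i * Q i)) ∧
          qalloc (Function.update Q i Q') i > qalloc Q i)) :=
  stmt_14_general N ψ c hψ hc Ψ Qtot hΨ qalloc hqalloc Q hQpos hC1 hC2
end

section
/- (Theorem 2, global optimality.) Let Q* be the profile with Q*_i = Q_tot · (ψ_i/(Ψ + c_i)) / (Σ_{l=1}^N ψ_l/(Ψ + c_l)). Then the unique maximizer of S_{Q*} over F(Q*) is q = Q* itself, achieving S_{Q*}(Q*) = Σ_{i=1}^N ψ_i · log(1 + Ψ/c_i); moreover, for every strategy profile Q with all Q_i > 0 and every q ∈ F(Q), S_Q(q) ≤ Σ_{i=1}^N ψ_i · log(1 + Ψ/c_i), so the profile Q* achieves the global maximum of social welfare. -/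
open Finset Real

/-! Each summand `ψ i * log (1 + Ψ q_i / (c_i Q_i))` is strictly increasing in `q_i`, so on `F(Q)` it
is at most its value at `q_i = Q_i`, namely `ψ i * log (1 + Ψ / c_i)`, whatever `Q` is; equality of the
weighted sums forces equality of every summand, hence `q = Q`. The profile `Q*` spends exactly the
quota, so `q = Q*` is feasible for `F(Q*)` and attains this bound. -/

section WeightedSum

variable {ι : Type*} [Fintype ι] {w : ι → ℝ} {f : ι → ℝ → ℝ} {s : Set ℝ} {x y : ι → ℝ}

theorem sum_mul_le_sum_mul_of_monotoneOn (hw : ∀ i, 0 ≤ w i) (hf : ∀ i, MonotoneOn (f i) s)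
    (hx : ∀ i, x i ∈ s) (hy : ∀ i, y i ∈ s) (hxy : x ≤ y) :
    ∑ i, w i * f i (x i) ≤ ∑ i, w i * f i (y i) :=
  sum_le_sum fun i _ => mul_le_mul_of_nonneg_left (hf i (hx i) (hy i) (hxy i)) (hw i)

theorem eq_of_sum_mul_eq_of_strictMonoOn (hw : ∀ i, 0 < w i) (hf : ∀ i, StrictMonoOn (f i) s)
    (hx : ∀ i, x i ∈ s) (hy : ∀ i, y i ∈ s) (hxy : x ≤ y)
    (heq : ∑ i, w i * f i (x i) = ∑ i, w i * f i (y i)) : x = y := by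
  have hle : ∀ i ∈ univ, w i * f i (x i) ≤ w i * f i (y i) := fun i _ =>
    mul_le_mul_of_nonneg_left ((hf i).monotoneOn (hx i) (hy i) (hxy i)) (hw i).le
  funext i
  have hwi : w i * f i (x i) = w i * f i (y i) := (sum_eq_sum_iff_of_le hle).1 heq i (mem_univ i)
  exact (hf i).injOn (hx i) (hy i) (mul_left_cancel₀ (hw i).ne' hwi)

end WeightedSum

section Normalization

variable {ι : Type*} [Fintype ι] {T : ℝ} {w : ι → ℝ}

theorem mul_div_sum_pos (hT : 0 < T) (hw : ∀ i, 0 < w i) (i : ι) :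
    0 < T * w i / ∑ l, w l :=
  div_pos (mul_pos hT (hw i)) (sum_pos (fun l _ => hw l) ⟨i, mem_univ i⟩)

theorem sum_mul_div_sum_le (hT : 0 ≤ T) (w : ι → ℝ) : ∑ i, T * w i / ∑ l, w l ≤ T := by
  rw [← sum_div, ← mul_sum, mul_div_assoc]
  exact mul_le_of_le_one_right hT (div_self_le_one _)

end Normalization

section WelfareTerm

variable {Ψ c Q : ℝ}

theorem strictMonoOn_log_one_add_mul_div (hΨ : 0 < Ψ) (hc : 0 < c) (hQ : 0 < Q) :
    StrictMonoOn (fun x => log (1 + Ψ * x / (c * Q))) (Set.Ici 0) := by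
  intro x (hx : 0 ≤ x) y _ hxy
  exact log_lt_log (by positivity) (by gcongr)

theorem log_one_add_mul_self_div (hQ : Q ≠ 0) :
    log (1 + Ψ * Q / (c * Q)) = log (1 + Ψ / c) := by
  rw [mul_div_mul_right _ _ hQ]

end WelfareTerm

theorem stmt_16_general (N : ℕ) (ψ c : Fin N → ℝ)
    (hψ : ∀ i, 0 < ψ i) (hc : ∀ i, 0 < c i)
    (Ψ Qtot : ℝ) (hΨ : 0 < Ψ) (hQtot : 0 < Qtot)
    (Qs : Fin N → ℝ)
    (hQs : ∀ i, Qs i = Qtot * (ψ i / (Ψ + c i)) / ∑ l, ψ l / (Ψ + c l)) :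
    ((∀ i, 0 ≤ Qs i ∧ Qs i ≤ Qs i) ∧ ∑ i, Qs i ≤ Qtot) ∧
    (∀ q : Fin N → ℝ, ((∀ i, 0 ≤ q i ∧ q i ≤ Qs i) ∧ ∑ i, q i ≤ Qtot) →
      ∑ i, ψ i * Real.log (1 + Ψ * q i / (c i * Qs i)) ≤
        ∑ i, ψ i * Real.log (1 + Ψ * Qs i / (c i * Qs i)) ∧
      (∑ i, ψ i * Real.log (1 + Ψ * q i / (c i * Qs i)) =
        ∑ i, ψ i * Real.log (1 + Ψ * Qs i / (c i * Qs i)) → q = Qs)) ∧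
    (∑ i, ψ i * Real.log (1 + Ψ * Qs i / (c i * Qs i)) =
      ∑ i, ψ i * Real.log (1 + Ψ / c i)) ∧
    (∀ Q : Fin N → ℝ, (∀ i, 0 < Q i) →
      ∀ q : Fin N → ℝ, ((∀ i, 0 ≤ q i ∧ q i ≤ Q i) ∧ ∑ i, q i ≤ Qtot) →
        ∑ i, ψ i * Real.log (1 + Ψ * q i / (c i * Q i)) ≤
          ∑ i, ψ i * Real.log (1 + Ψ / c i)) := by
  have hQs_pos : ∀ i, 0 < Qs i := fun i => by
    rw [hQs i]
    exact mul_div_sum_pos (w := fun l => ψ l / (Ψ + c l)) hQtot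
      (fun l => div_pos (hψ l) (by linarith [hc l])) i
  have hQs_sum : ∑ i, Qs i ≤ Qtot := by
    simp_rw [hQs]
    exact sum_mul_div_sum_le hQtot.le _
  have hmono : ∀ Q : Fin N → ℝ, (∀ i, 0 < Q i) →
      ∀ i, StrictMonoOn (fun x => log (1 + Ψ * x / (c i * Q i))) (Set.Ici 0) :=
    fun Q hQ i => strictMonoOn_log_one_add_mul_div hΨ (hc i) (hQ i)
  have hle : ∀ Q : Fin N → ℝ, (∀ i, 0 < Q i) → ∀ q : Fin N → ℝ, (∀ i, 0 ≤ q i ∧ q i ≤ Q i) →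
      ∑ i, ψ i * log (1 + Ψ * q i / (c i * Q i)) ≤ ∑ i, ψ i * log (1 + Ψ * Q i / (c i * Q i)) :=
    fun Q hQ q hq => sum_mul_le_sum_mul_of_monotoneOn
      (f := fun i x => log (1 + Ψ * x / (c i * Q i))) (fun i => (hψ i).le)
      (fun i => (hmono Q hQ i).monotoneOn) (fun i => (hq i).1) (fun i => (hQ i).le)
      (fun i => (hq i).2)
  have hval : ∀ Q : Fin N → ℝ, (∀ i, 0 < Q i) →
      ∑ i, ψ i * log (1 + Ψ * Q i / (c i * Q i)) = ∑ i, ψ i * log (1 + Ψ / c i) :=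
    fun Q hQ => sum_congr rfl fun i _ => by rw [log_one_add_mul_self_div (hQ i).ne']
  refine ⟨⟨fun i => ⟨(hQs_pos i).le, le_rfl⟩, hQs_sum⟩, fun q hq => ⟨hle Qs hQs_pos q hq.1, ?_⟩,
    hval Qs hQs_pos, fun Q hQ q hq => (hle Q hQ q hq.1).trans_eq (hval Q hQ)⟩
  exact eq_of_sum_mul_eq_of_strictMonoOn (f := fun i x => log (1 + Ψ * x / (c i * Qs i)))
    hψ (hmono Qs hQs_pos) (fun i => (hq.1 i).1) (fun i => (hQs_pos i).le) (fun i => (hq.1 i).2)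

/-- Theorem 2, global optimality: for the profile
Q*_i = Q_tot·(ψ_i/(Ψ+c_i))/(Σ_l ψ_l/(Ψ+c_l)), the allocation q = Q* is feasible for
F(Q*) and is the unique maximizer of S_{Q*} over F(Q*), achieving the value
Σ ψ_i log(1+Ψ/c_i); moreover for every positive profile Q and every q ∈ F(Q),
S_Q(q) ≤ Σ ψ_i log(1+Ψ/c_i), so Q* achieves the global maximum of social welfare. -/
theorem stmt_16 (N : ℕ) (hN : 1 ≤ N) (ψ c : Fin N → ℝ)
    (hψ : ∀ i, 0 < ψ i) (hc : ∀ i, 0 < c i)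
    (Ψ Qtot : ℝ) (hΨ : 0 < Ψ) (hQtot : 0 < Qtot)
    (Qs : Fin N → ℝ)
    (hQs : ∀ i, Qs i = Qtot * (ψ i / (Ψ + c i)) / ∑ l, ψ l / (Ψ + c l)) :
    ((∀ i, 0 ≤ Qs i ∧ Qs i ≤ Qs i) ∧ ∑ i, Qs i ≤ Qtot) ∧
    (∀ q : Fin N → ℝ, ((∀ i, 0 ≤ q i ∧ q i ≤ Qs i) ∧ ∑ i, q i ≤ Qtot) →
      ∑ i, ψ i * Real.log (1 + Ψ * q i / (c i * Qs i)) ≤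
        ∑ i, ψ i * Real.log (1 + Ψ * Qs i / (c i * Qs i)) ∧
      (∑ i, ψ i * Real.log (1 + Ψ * q i / (c i * Qs i)) =
        ∑ i, ψ i * Real.log (1 + Ψ * Qs i / (c i * Qs i)) → q = Qs)) ∧
    (∑ i, ψ i * Real.log (1 + Ψ * Qs i / (c i * Qs i)) =
      ∑ i, ψ i * Real.log (1 + Ψ / c i)) ∧
    (∀ Q : Fin N → ℝ, (∀ i, 0 < Q i) →
      ∀ q : Fin N → ℝ, ((∀ i, 0 ≤ q i ∧ q i ≤ Q i) ∧ ∑ i, q i ≤ Qtot) →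
        ∑ i, ψ i * Real.log (1 + Ψ * q i / (c i * Q i)) ≤
          ∑ i, ψ i * Real.log (1 + Ψ / c i)) :=
  stmt_16_general N ψ c hψ hc Ψ Qtot hΨ hQtot Qs hQs
end
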